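/- Let X be a real vector space equipped with two norms ‖·‖_d and ‖·‖_ρ such that ‖x−y‖_d ≤ ‖x−y‖_ρ for all x, y ∈ X, (X, ‖·‖_d) is a quasi-Banach space (complete), T : X → X is continuous with respect to ‖·‖_d, and T is a (b,θ)-enriched contraction with respect to ‖·‖_ρ. Then T has a unique fixed point x*, and for every x_0 ∈ X the iteration x_{n+1} = (1−λ)x_n + λT x_n with λ = 1/(b+1) converges to x* in ‖·‖_d. -/

import Mathlib

/-!
The averaged map `S = (1 - λ) I + λ T`, `λ = 1 / (b + 1)`, is a `θ / (b + 1)`-contraction for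
`‖·‖_ρ`. A quasi-norm satisfies the triangle inequality only up to a constant, so geometric decay
of the steps is not enough for the Cauchy property; instead one bounds the whole orbit (a high
iterate of `S` beats the constant) and then `‖xₙ₊ₖ - xₙ‖_ρ ≤ γⁿ sup_k ‖x_k - x₀‖_ρ`. Domination of
`‖·‖_d` by `‖·‖_ρ` and completeness give a `‖·‖_d`-limit, which `T` fixes by `‖·‖_d`-continuity.
The fixed point is unique since `(b + 1) ‖p - q‖_ρ ≤ θ ‖p - q‖_ρ` for fixed points `p`, `q`.
-/

open Filter Topology

section QuasiSeminorm

variable {X : Type*} [AddCommGroup X]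

theorem iterate_sub_le_pow_mul {N : X → ℝ} {S : X → X} {γ : ℝ} (hγ₀ : 0 ≤ γ)
    (hS : ∀ x y, N (S x - S y) ≤ γ * N (x - y)) (n : ℕ) (x y : X) :
    N (S^[n] x - S^[n] y) ≤ γ ^ n * N (x - y) := by
  induction n with
  | zero => simp
  | succ n ih =>
    rw [Function.iterate_succ_apply', Function.iterate_succ_apply', pow_succ', mul_assoc]
    exact (hS _ _).trans (mul_le_mul_of_nonneg_left ih hγ₀)

variable [Module ℝ X]

structure IsQuasiSeminorm (N : X → ℝ) (C : ℝ) : Prop where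
  nonneg : ∀ x, 0 ≤ N x
  smul : ∀ (r : ℝ) (x : X), N (r • x) = |r| * N x
  add_le : ∀ x y, N (x + y) ≤ C * (N x + N y)

namespace IsQuasiSeminorm

variable {N : X → ℝ} {C : ℝ}

theorem neg (hN : IsQuasiSeminorm N C) (x : X) : N (-x) = N x := by
  simpa using hN.smul (-1) x

theorem sub_comm (hN : IsQuasiSeminorm N C) (x y : X) : N (x - y) = N (y - x) := by
  rw [← neg_sub, hN.neg]

theorem sub_le (hN : IsQuasiSeminorm N C) (x y z : X) :
    N (x - z) ≤ C * (N (x - y) + N (y - z)) := by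
  simpa using hN.add_le (x - y) (y - z)

theorem tendsto_add {ι : Type*} {l : Filter ι} (hN : IsQuasiSeminorm N C) {u v : ι → X}
    (hu : Tendsto (fun i => N (u i)) l (𝓝 0)) (hv : Tendsto (fun i => N (v i)) l (𝓝 0)) :
    Tendsto (fun i => N (u i + v i)) l (𝓝 0) := by
  have hsum : Tendsto (fun i => C * (N (u i) + N (v i))) l (𝓝 0) := by
    simpa using (hu.add hv).const_mul C
  exact squeeze_zero (fun i => hN.nonneg _) (fun i => hN.add_le _ _) hsum

theorem tendsto_smul {ι : Type*} {l : Filter ι} (hN : IsQuasiSeminorm N C) {u : ι → X}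
    (hu : Tendsto (fun i => N (u i)) l (𝓝 0)) (r : ℝ) :
    Tendsto (fun i => N (r • u i)) l (𝓝 0) := by
  simpa [hN.smul] using hu.const_mul |r|

/-- With `C γ ^ p < 1 / 2`, the quasi-triangle inequality through `S^[p] x` gives
`a (p + k) ≤ C γ ^ p a k + C a p` for `a k = N (S^[k] x - x)`, so `a` stays below
`∑ j < p, a j + 2 C a p` by strong induction. -/
theorem exists_iterate_sub_le_of_contracting (hN : IsQuasiSeminorm N C) (hC : 0 ≤ C)
    {S : X → X} {γ : ℝ} (hγ₀ : 0 ≤ γ) (hγ₁ : γ < 1)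
    (hS : ∀ x y, N (S x - S y) ≤ γ * N (x - y)) (x : X) :
    ∃ M, ∀ k, N (S^[k] x - x) ≤ M := by
  have hsmall : Tendsto (fun p => C * γ ^ p) atTop (𝓝 0) := by
    simpa using (tendsto_pow_atTop_nhds_zero_of_lt_one hγ₀ hγ₁).const_mul C
  obtain ⟨P, hP⟩ := eventually_atTop.1 (hsmall.eventually (gt_mem_nhds one_half_pos))
  set p := P + 1
  set a : ℕ → ℝ := fun k => N (S^[k] x - x)
  have ha (k : ℕ) : 0 ≤ a k := hN.nonneg _
  have hsum : 0 ≤ ∑ j ∈ Finset.range p, a j := Finset.sum_nonneg fun j _ => ha j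
  set M := ∑ j ∈ Finset.range p, a j + 2 * (C * a p)
  have hCa : 0 ≤ C * a p := mul_nonneg hC (ha p)
  refine ⟨M, fun k => ?_⟩
  induction k using Nat.strong_induction_on with
  | _ k ih =>
    change a k ≤ M
    by_cases hk : k < p
    · have : a k ≤ ∑ j ∈ Finset.range p, a j :=
        Finset.single_le_sum (fun j _ => ha j) (Finset.mem_range.2 hk)
      linarith
    · obtain ⟨k, rfl⟩ := Nat.exists_eq_add_of_le (not_lt.1 hk)
      have hk' : a k ≤ M := ih k (by omega)
      calc a (p + k) ≤ C * (N (S^[p] (S^[k] x) - S^[p] x) + a p) := by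
            simpa only [a, Function.iterate_add_apply] using hN.sub_le _ (S^[p] x) x
        _ ≤ C * γ ^ p * M + C * a p := by
            have := iterate_sub_le_pow_mul hγ₀ hS p (S^[k] x) x
            have : C * γ ^ p * a k ≤ C * γ ^ p * M := by gcongr
            nlinarith
        _ ≤ 1 / 2 * M + C * a p := by
            gcongr
            exact (hP p (Nat.le_succ P)).le
        _ ≤ M := by linarith

theorem tendsto_apply_sub_apply {ι : Type*} {l : Filter ι} (hN : IsQuasiSeminorm N C)
    {T : X → X} {x : X} (hT : ∀ ε > 0, ∃ δ > 0, ∀ y, N (y - x) < δ → N (T y - T x) < ε)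
    {u : ι → X} (hu : Tendsto (fun i => N (u i - x)) l (𝓝 0)) :
    Tendsto (fun i => N (T (u i) - T x)) l (𝓝 0) := by
  refine tendsto_order.2 ⟨fun a ha => Eventually.of_forall fun i => ha.trans_le (hN.nonneg _),
    fun ε hε => ?_⟩
  obtain ⟨δ, hδ, hTδ⟩ := hT ε hε
  exact (hu.eventually (gt_mem_nhds hδ)).mono fun i hi => hTδ _ hi

theorem exists_tendsto_iterate {Nd Nρ : X → ℝ} {Cd Cρ : ℝ} (hd : IsQuasiSeminorm Nd Cd)
    (hρ : IsQuasiSeminorm Nρ Cρ) (hCρ : 0 ≤ Cρ) (hle : ∀ x y, Nd (x - y) ≤ Nρ (x - y))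
    (hcomplete : ∀ u : ℕ → X,
      (∀ ε > 0, ∃ N : ℕ, ∀ m ≥ N, ∀ n ≥ N, Nd (u m - u n) < ε) →
      ∃ l : X, Tendsto (fun n => Nd (u n - l)) atTop (𝓝 0))
    {S : X → X} {γ : ℝ} (hγ₀ : 0 ≤ γ) (hγ₁ : γ < 1)
    (hS : ∀ x y, Nρ (S x - S y) ≤ γ * Nρ (x - y)) (x : X) :
    ∃ l, Tendsto (fun n => Nd (S^[n] x - l)) atTop (𝓝 0) := by
  obtain ⟨M, hM⟩ := hρ.exists_iterate_sub_le_of_contracting hCρ hγ₀ hγ₁ hS x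
  have hdist (n k : ℕ) : Nd (S^[n + k] x - S^[n] x) ≤ γ ^ n * M :=
    calc Nd (S^[n + k] x - S^[n] x) ≤ Nρ (S^[n] (S^[k] x) - S^[n] x) := by
          rw [Function.iterate_add_apply]; exact hle _ _
      _ ≤ γ ^ n * Nρ (S^[k] x - x) := iterate_sub_le_pow_mul hγ₀ hS n _ _
      _ ≤ γ ^ n * M := by gcongr; exact hM k
  refine hcomplete _ fun ε hε => ?_
  have hsmall : Tendsto (fun n => γ ^ n * M) atTop (𝓝 0) := by
    simpa using (tendsto_pow_atTop_nhds_zero_of_lt_one hγ₀ hγ₁).mul_const M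
  obtain ⟨N, hN⟩ := eventually_atTop.1 (hsmall.eventually (gt_mem_nhds hε))
  refine ⟨N, fun m hm n hn => ?_⟩
  rcases le_total n m with hnm | hmn
  · obtain ⟨k, rfl⟩ := Nat.exists_eq_add_of_le hnm
    exact (hdist n k).trans_lt (hN n hn)
  · obtain ⟨k, rfl⟩ := Nat.exists_eq_add_of_le hmn
    rw [hd.sub_comm]
    exact (hdist m k).trans_lt (hN m hm)

end IsQuasiSeminorm

end QuasiSeminorm

section EnrichedContraction

variable {X : Type*} [AddCommGroup X] [Module ℝ X]

/-- The Krasnoselskij map `T_λ` (here `λ = t`). -/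
def averagedMap (T : X → X) (t : ℝ) (x : X) : X := (1 - t) • x + t • T x

/-- The constraints `0 ≤ b`, `0 ≤ θ < b + 1` of the definition are left to the hypotheses. -/
def IsEnrichedContraction (N : X → ℝ) (b θ : ℝ) (T : X → X) : Prop :=
  ∀ x y, N (b • (x - y) + (T x - T y)) ≤ θ * N (x - y)

variable {T : X → X} {b : ℝ}

theorem averagedMap_sub_averagedMap (hb : b + 1 ≠ 0) (x y : X) :
    averagedMap T (1 / (b + 1)) x - averagedMap T (1 / (b + 1)) y =
      (1 / (b + 1)) • (b • (x - y) + (T x - T y)) := by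
  have hcoeff : 1 / (b + 1) * b = 1 - 1 / (b + 1) := by field_simp; ring
  rw [averagedMap, averagedMap, smul_add, smul_smul, hcoeff]
  module

theorem apply_eq_smul_averagedMap_sub (hb : b + 1 ≠ 0) (x : X) :
    T x = (b + 1) • averagedMap T (1 / (b + 1)) x - b • x := by
  rw [averagedMap, smul_add, smul_smul, smul_smul, mul_one_div_cancel hb, one_smul,
    mul_sub, mul_one_div_cancel hb]
  module

namespace IsEnrichedContraction

variable {N : X → ℝ} {C θ : ℝ}

theorem averagedMap_sub_le (hT : IsEnrichedContraction N b θ T) (hN : IsQuasiSeminorm N C)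
    (hb : 0 < b + 1) (x y : X) :
    N (averagedMap T (1 / (b + 1)) x - averagedMap T (1 / (b + 1)) y) ≤
      θ / (b + 1) * N (x - y) := by
  rw [averagedMap_sub_averagedMap hb.ne', hN.smul, abs_of_pos (by positivity)]
  calc 1 / (b + 1) * N (b • (x - y) + (T x - T y)) ≤ 1 / (b + 1) * (θ * N (x - y)) := by
        gcongr; exact hT x y
    _ = θ / (b + 1) * N (x - y) := by ring

theorem eq_of_isFixedPt (hT : IsEnrichedContraction N b θ T) (hN : IsQuasiSeminorm N C)
    (h0 : ∀ x, N x = 0 ↔ x = 0) (hθ : θ < b + 1) {p q : X}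
    (hp : Function.IsFixedPt T p) (hq : Function.IsFixedPt T q) : p = q := by
  have h := hT p q
  rw [hp, hq, show b • (p - q) + (p - q) = (b + 1) • (p - q) by module, hN.smul] at h
  have hpq : N (p - q) = 0 := by
    nlinarith [mul_le_mul_of_nonneg_right (le_abs_self (b + 1)) (hN.nonneg (p - q)),
      hN.nonneg (p - q)]
  exact sub_eq_zero.1 ((h0 _).1 hpq)

end IsEnrichedContraction

theorem isFixedPt_of_tendsto_iterate_averagedMap {N : X → ℝ} {C : ℝ} (hN : IsQuasiSeminorm N C)
    (h0 : ∀ x, N x = 0 ↔ x = 0) {l : X}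
    (hcont : ∀ ε > 0, ∃ δ > 0, ∀ y, N (y - l) < δ → N (T y - T l) < ε) (hb : b + 1 ≠ 0) {x : X}
    (hl : Tendsto (fun n => N ((averagedMap T (1 / (b + 1)))^[n] x - l)) atTop (𝓝 0)) :
    Function.IsFixedPt T l := by
  set S := averagedMap T (1 / (b + 1))
  have hTl : Tendsto (fun n => N (T l - T (S^[n] x))) atTop (𝓝 0) := by
    simpa only [hN.sub_comm (T l)] using hN.tendsto_apply_sub_apply hcont hl
  -- `T` is recovered from the iteration: `T xₙ = (b + 1) xₙ₊₁ - b xₙ`.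
  have hTu : Tendsto (fun n => N (T (S^[n] x) - l)) atTop (𝓝 0) := by
    refine (hN.tendsto_add (hN.tendsto_smul (hl.comp (tendsto_add_atTop_nat 1)) (b + 1))
      (hN.tendsto_smul hl (-b))).congr fun n => congrArg N ?_
    simp only [Function.iterate_succ_apply']
    rw [apply_eq_smul_averagedMap_sub (T := T) hb (S^[n] x)]
    module
  have hconst : Tendsto (fun _ : ℕ => N (T l - l)) atTop (𝓝 0) :=
    (hN.tendsto_add hTl hTu).congr fun n => by rw [sub_add_sub_cancel]
  exact sub_eq_zero.1 ((h0 _).1 (tendsto_const_nhds_iff.1 hconst))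

end EnrichedContraction

theorem stmt_11_general {X : Type*} [AddCommGroup X] [Module ℝ X]
    (Nd Nρ : X → ℝ) (Cd Cρ : ℝ) (hCρ : 1 ≤ Cρ)
    (hnnd : ∀ x, 0 ≤ Nd x) (h0d : ∀ x, Nd x = 0 ↔ x = 0)
    (h1d : ∀ (r : ℝ) (x : X), Nd (r • x) = |r| * Nd x)
    (h2d : ∀ x y, Nd (x + y) ≤ Cd * (Nd x + Nd y))
    (hnnρ : ∀ x, 0 ≤ Nρ x) (h0ρ : ∀ x, Nρ x = 0 ↔ x = 0)
    (h1ρ : ∀ (r : ℝ) (x : X), Nρ (r • x) = |r| * Nρ x)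
    (h2ρ : ∀ x y, Nρ (x + y) ≤ Cρ * (Nρ x + Nρ y))
    (hle : ∀ x y : X, Nd (x - y) ≤ Nρ (x - y))
    (hcomplete : ∀ u : ℕ → X,
      (∀ ε > 0, ∃ N : ℕ, ∀ m ≥ N, ∀ n ≥ N, Nd (u m - u n) < ε) →
      ∃ l : X, Filter.Tendsto (fun n => Nd (u n - l)) Filter.atTop (nhds 0))
    (T : X → X)
    (hcont : ∀ x : X, ∀ ε > 0, ∃ δ > 0, ∀ y : X, Nd (y - x) < δ → Nd (T y - T x) < ε)
    (b θ : ℝ) (hθ0 : 0 ≤ θ) (hθ : θ < b + 1)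
    (hT : ∀ x y, Nρ (b • (x - y) + (T x - T y)) ≤ θ * Nρ (x - y)) :
    ∃ xstar : X, T xstar = xstar ∧ (∀ q, T q = q → q = xstar) ∧
      ∀ xs : ℕ → X,
        (∀ n : ℕ, xs (n + 1) = (1 - 1 / (b + 1)) • xs n + (1 / (b + 1)) • T (xs n)) →
        Filter.Tendsto (fun n => Nd (xs n - xstar)) Filter.atTop (nhds 0) := by
  have hd : IsQuasiSeminorm Nd Cd := ⟨hnnd, h1d, h2d⟩
  have hρ : IsQuasiSeminorm Nρ Cρ := ⟨hnnρ, h1ρ, h2ρ⟩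
  have hT : IsEnrichedContraction Nρ b θ T := hT
  have hb : 0 < b + 1 := hθ0.trans_lt hθ
  set S := averagedMap T (1 / (b + 1))
  have hlim (x : X) : ∃ l, Function.IsFixedPt T l ∧
      Tendsto (fun n => Nd (S^[n] x - l)) atTop (𝓝 0) := by
    obtain ⟨l, hl⟩ := hd.exists_tendsto_iterate hρ (zero_le_one.trans hCρ) hle hcomplete
      (div_nonneg hθ0 hb.le) ((div_lt_one hb).2 hθ) (hT.averagedMap_sub_le hρ hb) x
    exact ⟨l, isFixedPt_of_tendsto_iterate_averagedMap hd h0d (hcont l) hb.ne' hl, hl⟩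
  have huniq {p q : X} (hp : T p = p) (hq : T q = q) : p = q :=
    hT.eq_of_isFixedPt hρ h0ρ hθ hp hq
  obtain ⟨xstar, hfix, -⟩ := hlim 0
  refine ⟨xstar, hfix, fun q hq => huniq hq hfix, fun xs hxs => ?_⟩
  have hxs_eq : xs = fun n => S^[n] (xs 0) := funext fun n => by
    induction n with
    | zero => rfl
    | succ n ih => rw [hxs, ih, Function.iterate_succ_apply']; rfl
  obtain ⟨l, hl, hconv⟩ := hlim (xs 0)
  rwa [hxs_eq, ← huniq hl hfix]

/-- Maia-type theorem: two quasi-norms ‖·‖_d ≤ ‖·‖_ρ on X,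
(X,‖·‖_d) complete, T continuous w.r.t. ‖·‖_d and a (b,θ)-enriched contraction
w.r.t. ‖·‖_ρ; then T has a unique fixed point x* and the Krasnoselskij iteration
with λ = 1/(b+1) converges to x* in ‖·‖_d from any x₀. -/
theorem stmt_11 {X : Type*} [AddCommGroup X] [Module ℝ X]
    (Nd Nρ : X → ℝ) (Cd Cρ : ℝ) (hCd : 1 ≤ Cd) (hCρ : 1 ≤ Cρ)
    (hnnd : ∀ x, 0 ≤ Nd x) (h0d : ∀ x, Nd x = 0 ↔ x = 0)
    (h1d : ∀ (r : ℝ) (x : X), Nd (r • x) = |r| * Nd x)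
    (h2d : ∀ x y, Nd (x + y) ≤ Cd * (Nd x + Nd y))
    (hnnρ : ∀ x, 0 ≤ Nρ x) (h0ρ : ∀ x, Nρ x = 0 ↔ x = 0)
    (h1ρ : ∀ (r : ℝ) (x : X), Nρ (r • x) = |r| * Nρ x)
    (h2ρ : ∀ x y, Nρ (x + y) ≤ Cρ * (Nρ x + Nρ y))
    (hle : ∀ x y : X, Nd (x - y) ≤ Nρ (x - y))
    (hcomplete : ∀ u : ℕ → X,
      (∀ ε > 0, ∃ N : ℕ, ∀ m ≥ N, ∀ n ≥ N, Nd (u m - u n) < ε) →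
      ∃ l : X, Filter.Tendsto (fun n => Nd (u n - l)) Filter.atTop (nhds 0))
    (T : X → X)
    (hcont : ∀ x : X, ∀ ε > 0, ∃ δ > 0, ∀ y : X, Nd (y - x) < δ → Nd (T y - T x) < ε)
    (b θ : ℝ) (hb : 0 ≤ b) (hθ0 : 0 ≤ θ) (hθ : θ < b + 1)
    (hT : ∀ x y, Nρ (b • (x - y) + (T x - T y)) ≤ θ * Nρ (x - y)) :
    ∃ xstar : X, T xstar = xstar ∧ (∀ q, T q = q → q = xstar) ∧
      ∀ xs : ℕ → X,
        (∀ n : ℕ, xs (n + 1) = (1 - 1 / (b + 1)) • xs n + (1 / (b + 1)) • T (xs n)) →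
        Filter.Tendsto (fun n => Nd (xs n - xstar)) Filter.atTop (nhds 0) :=
  stmt_11_general Nd Nρ Cd Cρ hCρ hnnd h0d h1d h2d hnnρ h0ρ h1ρ h2ρ hle hcomplete T hcont b θ hθ0 hθ
    hT
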